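/- arXiv:2003.01600 — 3 statements merged into one kernel-verified Lean document; each statement's English description precedes it below -/
import Mathlib

section
/- Let p be a prime, A an elementary abelian group of order p² acting on a finite group R of order prime to p. Then R is generated by the fixed-point subgroups of the nontrivial elements of A: R = ⟨C_R(a) : a ∈ A, a ≠ 1⟩. -/
/-!
Fixed points lift through an `A`-invariant normal subgroup `N`: if `c ∈ A` (of order dividing
`p`) fixes the coset `gN`, it permutes that coset, whose size `|N|` is prime to `p`, so it fixes
one of its points.

For abelian `R` this shows that `A` acts on `R / ⟨C_R(a) : a ≠ 1⟩` without nontrivial fixed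
points, and such a group `W` is trivial: choosing `a, b` with `a ∉ ⟨b⟩`, the norms of `w ∈ W`
along `⟨a b^j⟩` are fixed points, hence trivial, and their product over `j` regroups as `w^p`
times the norms of the `a^i w` along `⟨b⟩`, `i ≠ 0`; so `w^p = 1` and `w = 1`.

In general, induct on `|R|`. For every prime `q` the `p`-group `A` fixes one of the Sylow
`q`-subgroups, as their number divides `|R|`. If that Sylow subgroup is proper, it lies in
`⟨C_R(a)⟩` by induction; otherwise `R` is a `q`-group, handled through its centre (the abelian
case) and `R / Z(R)` (induction). So the index of `⟨C_R(a)⟩` has no prime divisor.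
-/

open Subgroup

section MulAutAction

variable {A G : Type*} [Group A] [Group G]

def fixedPointsClosure (φ : A →* MulAut G) : Subgroup G :=
  closure {g | ∃ a : A, a ≠ 1 ∧ φ a g = g}

variable (φ : A →* MulAut G) {N : Subgroup G}

theorem map_mulAut_eq_of_forall_mem (hN : ∀ a, ∀ x ∈ N, φ a x ∈ N) (a : A) :
    N.map (φ a).toMonoidHom = N :=
  le_antisymm (map_le_iff_le_comap.2 fun x hx => hN a x hx)
    fun x hx => ⟨φ a⁻¹ x, hN _ _ hx, by simp⟩

def restrictMulAut (N : Subgroup G) (hN : ∀ a, ∀ x ∈ N, φ a x ∈ N) : A →* MulAut N where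
  toFun a :=
    ((φ a).subgroupMap N).trans (MulEquiv.subgroupCongr (map_mulAut_eq_of_forall_mem φ hN a))
  map_one' := MulEquiv.ext fun x => Subtype.ext <| show φ 1 x = x by simp
  map_mul' a b := MulEquiv.ext fun x => Subtype.ext <| show φ (a * b) x = φ a (φ b x) by simp

def quotientMulAut (N : Subgroup G) [N.Normal] (hN : ∀ a, ∀ x ∈ N, φ a x ∈ N) :
    A →* MulAut (G ⧸ N) where
  toFun a := QuotientGroup.congr N N (φ a) (map_mulAut_eq_of_forall_mem φ hN a)
  map_one' := by
    ext x
    induction x using QuotientGroup.induction_on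
    simp
  map_mul' a b := by
    ext x
    induction x using QuotientGroup.induction_on
    simp [QuotientGroup.congr]

theorem le_fixedPointsClosure_of_restrict (hN : ∀ a, ∀ x ∈ N, φ a x ∈ N)
    (h : fixedPointsClosure (restrictMulAut φ N hN) = ⊤) : N ≤ fixedPointsClosure φ := by
  rw [← N.range_subtype, MonoidHom.range_eq_map, ← h, fixedPointsClosure,
    MonoidHom.map_closure, closure_le]
  rintro _ ⟨x, ⟨a, ha, hx⟩, rfl⟩
  exact subset_closure ⟨a, ha, congrArg Subtype.val hx⟩

theorem exists_fixed_mk_eq {p : ℕ} [Fact p.Prime] [N.Normal] (hN : ∀ a, ∀ x ∈ N, φ a x ∈ N)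
    (hcop : Nat.Coprime (Nat.card N) p) {c : A} (hc : c ^ p = 1) {x : G ⧸ N}
    (hx : quotientMulAut φ N hN c x = x) : ∃ g : G, φ c g = g ∧ (g : G ⧸ N) = x := by
  let fiber : Set G := QuotientGroup.mk ⁻¹' {x}
  have hfiber (g : G) : MulAut.toPerm G (φ c) g ∈ fiber ↔ g ∈ fiber := by
    change quotientMulAut φ N hN c g = x ↔ (g : G ⧸ N) = x
    nth_rewrite 1 [← hx]
    exact (quotientMulAut φ N hN c).injective.eq_iff
  have hσ : (MulAut.toPerm G (φ c)).subtypePerm hfiber ^ p ^ 1 = 1 := by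
    rw [pow_one, Equiv.Perm.subtypePerm_pow]
    ext g
    simp [← map_pow, hc]
  have hcard : Nat.card fiber = Nat.card N := by
    simpa using QuotientGroup.card_preimage_mk N {x}
  have hp : ¬ p ∣ Nat.card fiber := hcard ▸ (Nat.Prime.coprime_iff_not_dvd Fact.out).1 hcop.symm
  have : Finite fiber := Nat.finite_of_card_ne_zero fun h => hp (h ▸ dvd_zero p)
  have : Fintype fiber := Fintype.ofFinite _
  obtain ⟨⟨g, hg⟩, hfix⟩ :=
    Equiv.Perm.exists_fixed_point_of_prime (Nat.card_eq_fintype_card (α := fiber) ▸ hp) hσ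
  exact ⟨g, congrArg Subtype.val hfix, hg⟩

theorem fixedPointsClosure_eq_top_of_quotient {p : ℕ} [Fact p.Prime]
    (hexp : ∀ a : A, a ^ p = 1) [N.Normal] (hN : ∀ a, ∀ x ∈ N, φ a x ∈ N)
    (hcop : Nat.Coprime (Nat.card N) p) (hle : N ≤ fixedPointsClosure φ)
    (hquot : fixedPointsClosure (quotientMulAut φ N hN) = ⊤) : fixedPointsClosure φ = ⊤ := by
  have hmap : (fixedPointsClosure φ).map (QuotientGroup.mk' N) = ⊤ := by
    rw [eq_top_iff, ← hquot, fixedPointsClosure, closure_le]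
    rintro x ⟨c, hc, hx⟩
    obtain ⟨g, hg, rfl⟩ := exists_fixed_mk_eq φ hN hcop (hexp c) hx
    exact mem_map_of_mem _ (subset_closure ⟨c, hc, hg⟩)
  rw [← sup_eq_left.2 hle, ← QuotientGroup.ker_mk' N, ← comap_map_eq, hmap, comap_top]

theorem mapsTo_center (a : A) : ∀ x ∈ center G, φ a x ∈ center G :=
  fun _ hx => characteristic_iff_le_comap.1 inferInstance (φ a) hx

theorem exists_sylow_mapsTo [Finite G] {p q : ℕ} [Fact p.Prime] [Fact q.Prime]
    (hA : IsPGroup p A) (hcop : Nat.Coprime (Nat.card G) p) :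
    ∃ P : Sylow q G, ∀ a, ∀ x ∈ (P : Subgroup G), φ a x ∈ (P : Subgroup G) := by
  let _ := MulDistribMulAction.compHom G φ
  have hcard : ¬ p ∣ Nat.card (Sylow q G) := fun h =>
    (Nat.Prime.coprime_iff_not_dvd Fact.out).1 hcop.symm
      (h.trans (((default : Sylow q G).card_dvd_index).trans (index_dvd_card _)))
  obtain ⟨P, hP⟩ := hA.nonempty_fixed_point_of_prime_not_dvd_card (Sylow q G) hcard
  refine ⟨P, fun a x hx => ?_⟩
  have := smul_mem_pointwise_smul x a (P : Subgroup G) hx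
  rwa [← Sylow.pointwise_smul_def, hP a] at this

end MulAutAction

section FixedPointFree

theorem pow_zmod_val_add {M : Type*} [Monoid M] {p : ℕ} [NeZero p] {x : M} (hx : x ^ p = 1)
    (i j : ZMod p) : x ^ (i + j).val = x ^ i.val * x ^ j.val := by
  rw [ZMod.val_add, ← pow_eq_pow_mod _ hx, pow_add]

theorem pow_zmod_val_mul {M : Type*} [Monoid M] {p : ℕ} [NeZero p] {x : M} (hx : x ^ p = 1)
    (i j : ZMod p) : x ^ (i * j).val = (x ^ i.val) ^ j.val := by
  rw [ZMod.val_mul, ← pow_eq_pow_mod _ hx, pow_mul]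

theorem exists_notMem_zpowers_of_not_isCyclic {A : Type*} [Group A] (hA : ¬ IsCyclic A) :
    ∃ a b : A, b ≠ 1 ∧ a ∉ zpowers b := by
  rcases subsingleton_or_nontrivial A with _ | _
  · exact absurd isCyclic_of_subsingleton hA
  obtain ⟨b, hb⟩ := exists_ne (1 : A)
  obtain ⟨a, ha⟩ : ∃ a, a ∉ zpowers b := not_forall.1 fun h =>
    hA (isCyclic_iff_exists_zpowers_eq_top.2 ⟨b, eq_top_iff.2 fun a _ => h a⟩)
  exact ⟨a, b, hb, ha⟩

variable {W : Type*} [CommGroup W] {p : ℕ} [Fact p.Prime]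

theorem prod_zmod_pow_apply_fixed {A : Type*} [Group A] (φ : A →* MulAut W) {c : A}
    (hc : c ^ p = 1) (w : W) :
    φ c (∏ i : ZMod p, φ (c ^ i.val) w) = ∏ i : ZMod p, φ (c ^ i.val) w := by
  rw [map_prod]
  calc ∏ i : ZMod p, φ c (φ (c ^ i.val) w)
      = ∏ i : ZMod p, φ (c ^ (i + 1).val) w := by
        refine Finset.prod_congr rfl fun i _ => ?_
        rw [pow_zmod_val_add hc, ZMod.val_one, pow_one, ← pow_succ, pow_succ', map_mul,
          MulAut.mul_apply]
    _ = ∏ i : ZMod p, φ (c ^ i.val) w :=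
        Equiv.prod_comp (Equiv.addRight (1 : ZMod p)) fun i => φ (c ^ i.val) w

theorem eq_one_of_forall_fixed_eq_one {A : Type*} [CommGroup A] (φ : A →* MulAut W)
    (hcop : Nat.Coprime (Nat.card W) p) (hA : ¬ IsCyclic A) (hexp : ∀ a : A, a ^ p = 1)
    (hfix : ∀ c : A, c ≠ 1 → ∀ w, φ c w = w → w = 1) (w : W) : w = 1 := by
  obtain ⟨a, b, hb, hab⟩ := exists_notMem_zpowers_of_not_isCyclic hA
  have hnorm {c : A} (hc : c ≠ 1) (v : W) : ∏ i : ZMod p, φ (c ^ i.val) v = 1 :=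
    hfix c hc _ (prod_zmod_pow_apply_fixed φ (hexp c) v)
  have hrow (i : ZMod p) : ∏ j : ZMod p, φ (a ^ i.val * b ^ j.val) w = 1 := by
    rw [← hnorm hb (φ (a ^ i.val) w)]
    simp only [mul_comm (a ^ _), map_mul, MulAut.mul_apply]
  have hdiag (j : ZMod p) : ∏ i : ZMod p, φ (a ^ i.val * b ^ (j * i).val) w = 1 := by
    have hc : a * b ^ j.val ≠ 1 := fun h =>
      hab (eq_inv_of_mul_eq_one_left h ▸ inv_mem (pow_mem (mem_zpowers b) _))
    rw [← hnorm hc w]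
    simp only [mul_pow, pow_zmod_val_mul (hexp b)]
  have hwp : w ^ p = 1 := calc
    w ^ p = ∏ i : ZMod p, ∏ j : ZMod p, φ (a ^ i.val * b ^ (j * i).val) w := by
      rw [Fintype.prod_eq_single 0 fun i hi => ?_]
      · simp [ZMod.card]
      · rw [← hrow i]
        exact Equiv.prod_comp (Equiv.mulRight₀ i hi) fun j => φ (a ^ i.val * b ^ j.val) w
    _ = 1 := by
      rw [Finset.prod_comm]
      exact Finset.prod_eq_one fun j _ => hdiag j
  exact (Nat.Coprime.pow_left_bijective hcop).injective (by simpa using hwp)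

end FixedPointFree

section Generation

variable {A : Type*} [CommGroup A] {p : ℕ} [Fact p.Prime]

theorem mapsTo_fixedPointsClosure {G : Type*} [Group G] (φ : A →* MulAut G) (a : A) :
    ∀ x ∈ fixedPointsClosure φ, φ a x ∈ fixedPointsClosure φ := by
  refine fun x hx => (closure_le (fixedPointsClosure φ |>.comap (φ a).toMonoidHom)).2 ?_ hx
  rintro g ⟨c, hc, hg⟩
  refine subset_closure ⟨c, hc, ?_⟩
  change φ c (φ a g) = φ a g
  rw [← MulAut.mul_apply, ← map_mul, mul_comm, map_mul, MulAut.mul_apply, hg]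

theorem fixedPointsClosure_eq_top_of_commGroup {V : Type*} [CommGroup V] (φ : A →* MulAut V)
    (hcop : Nat.Coprime (Nat.card V) p) (hA : ¬ IsCyclic A) (hexp : ∀ a : A, a ^ p = 1) :
    fixedPointsClosure φ = ⊤ := by
  let H := fixedPointsClosure φ
  have hH := mapsTo_fixedPointsClosure φ
  have hcopH := hcop.coprime_dvd_left (card_subgroup_dvd_card H)
  have hfix (c : A) (hc : c ≠ 1) (x : V ⧸ H) (hx : quotientMulAut φ H hH c x = x) : x = 1 := by
    obtain ⟨g, hg, rfl⟩ := exists_fixed_mk_eq φ hH hcopH (hexp c) hx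
    exact (QuotientGroup.eq_one_iff g).2 (subset_closure ⟨c, hc, hg⟩)
  refine fixedPointsClosure_eq_top_of_quotient φ hexp hH hcopH le_rfl (eq_top_iff.2 fun x _ => ?_)
  rw [eq_one_of_forall_fixed_eq_one _ (hcop.coprime_dvd_left (card_quotient_dvd_card H)) hA
    hexp hfix x]
  exact one_mem _

theorem fixedPointsClosure_eq_top_of_center {G : Type*} [Group G] (φ : A →* MulAut G)
    (hcop : Nat.Coprime (Nat.card G) p) (hA : ¬ IsCyclic A) (hexp : ∀ a : A, a ^ p = 1)
    (hquot : fixedPointsClosure (quotientMulAut φ (center G) (mapsTo_center φ)) = ⊤) :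
    fixedPointsClosure φ = ⊤ := by
  have hcopZ := hcop.coprime_dvd_left (card_subgroup_dvd_card (center G))
  refine fixedPointsClosure_eq_top_of_quotient φ hexp (mapsTo_center φ) hcopZ ?_ hquot
  open scoped IsMulCommutative in
  exact le_fixedPointsClosure_of_restrict φ (mapsTo_center φ)
    (fixedPointsClosure_eq_top_of_commGroup _ hcopZ hA hexp)

theorem fixedPointsClosure_eq_top {G : Type*} [Group G] [Finite G] (φ : A →* MulAut G)
    (hcop : Nat.Coprime (Nat.card G) p) (hA : ¬ IsCyclic A) (hexp : ∀ a : A, a ^ p = 1) :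
    fixedPointsClosure φ = ⊤ := by
  induction hn : Nat.card G using Nat.strong_induction_on generalizing G with
  | _ n ih =>
  have hsub (K : Subgroup G) (hK : ∀ a, ∀ x ∈ K, φ a x ∈ K) (hlt : Nat.card K < n) :
      K ≤ fixedPointsClosure φ :=
    le_fixedPointsClosure_of_restrict φ hK
      (ih _ hlt _ (hcop.coprime_dvd_left (card_subgroup_dvd_card K)) rfl)
  have hpgroup (q : ℕ) [Fact q.Prime] (hG : IsPGroup q G) : fixedPointsClosure φ = ⊤ := by
    cases subsingleton_or_nontrivial G
    · exact Subsingleton.elim _ _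
    have := hG.center_nontrivial
    have hlt : Nat.card (G ⧸ center G) < n := by
      rw [← hn, card_eq_card_quotient_mul_card_subgroup (center G)]
      exact lt_mul_of_one_lt_right Nat.card_pos Finite.one_lt_card
    exact fixedPointsClosure_eq_top_of_center φ hcop hA hexp
      (ih _ hlt _ (hcop.coprime_dvd_left (card_quotient_dvd_card _)) rfl)
  refine index_eq_one.1 (Nat.eq_one_iff_not_exists_prime_dvd.2 fun q hq hdvd => ?_)
  have := Fact.mk hq
  obtain ⟨P, hP⟩ := exists_sylow_mapsTo φ (q := q) (fun a => ⟨1, by rw [pow_one, hexp]⟩) hcop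
  have hPH : (P : Subgroup G) ≤ fixedPointsClosure φ := by
    rcases (card_le_card_group (P : Subgroup G)).lt_or_eq with hlt | heq
    · exact hsub P hP (hn ▸ hlt)
    · exact hpgroup q (IsPGroup.iff_card.2 (heq ▸ IsPGroup.iff_card.1 P.isPGroup')) ▸ le_top
  exact P.not_dvd_index (hdvd.trans (index_dvd_of_le hPH))

end Generation

theorem not_isCyclic_of_card_eq_sq {A : Type*} [Group A] {p : ℕ} (hp : p.Prime)
    (hA : Nat.card A = p ^ 2) (hexp : ∀ a : A, a ^ p = 1) : ¬ IsCyclic A := by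
  have : Finite A := Nat.finite_of_card_ne_zero (by simp [hA, hp.ne_zero])
  rw [isCyclic_iff_exists_orderOf_eq_natCard, hA]
  rintro ⟨g, hg⟩
  have := Nat.le_of_dvd hp.pos (hg ▸ orderOf_dvd_of_pow_eq_one (hexp g))
  nlinarith [hp.two_le]

/-- Coprime action of an elementary abelian group `A` of order `p²` on a finite group `R`
of order prime to `p`: `R` is generated by the fixed points of the nontrivial elements
of `A`. -/
theorem coprime_action_generation {p : ℕ} (hp : p.Prime)
    {A R : Type*} [CommGroup A] [Group R] [Finite R]
    (hA : Nat.card A = p ^ 2) (hexp : ∀ a : A, a ^ p = 1)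
    (hcop : Nat.Coprime (Nat.card R) p)
    (φ : A →* MulAut R) :
    Subgroup.closure {r : R | ∃ a : A, a ≠ 1 ∧ φ a r = r} = ⊤ := by
  have := Fact.mk hp
  exact fixedPointsClosure_eq_top φ hcop (not_isCyclic_of_card_eq_sq hp hA hexp) hexp
end

section
/- Let p be a prime, a ≥ 1, and let g be an element of GL_n(𝔽_p) of order p^a. Then n ≥ p^{a-1} + 1. -/
/-!
In characteristic `p`, `(g - 1) ^ p ^ k = g ^ p ^ k - 1`, so an element `g` of order `p ^ a`
is unipotent. A nilpotent `n × n` matrix over a domain has characteristic polynomial `X ^ n`,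
hence `(g - 1) ^ n = 0`. If `n ≤ p ^ (a - 1)` this forces `g ^ p ^ (a - 1) = 1`,
contradicting `orderOf g = p ^ a`.
-/

theorem Units.orderOf_dvd_expChar_pow_iff {R : Type*} [Ring R] (p : ℕ) [ExpChar R p] (u : Rˣ)
    (k : ℕ) : orderOf u ∣ p ^ k ↔ ((u : R) - 1) ^ p ^ k = 0 := by
  rw [orderOf_dvd_iff_pow_eq_one, sub_pow_expChar_pow_of_commute p k (Commute.one_right _),
    one_pow, sub_eq_zero, ← Units.val_pow_eq_pow_val, Units.val_eq_one]

theorem Matrix.pow_card_eq_zero_of_isNilpotent {R n : Type*} [CommRing R] [IsDomain R]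
    [Fintype n] [DecidableEq n] {M : Matrix n n R} (hM : IsNilpotent M) :
    M ^ Fintype.card n = 0 := by
  have hcharpoly : M.charpoly = Polynomial.X ^ Fintype.card n :=
    sub_eq_zero.mp (Matrix.isNilpotent_charpoly_sub_pow_of_isNilpotent hM).eq_zero
  simpa [hcharpoly] using Matrix.aeval_self_charpoly M

theorem Matrix.GeneralLinearGroup.orderOf_dvd_char_pow_of_card_le {R n : Type*} [CommRing R]
    [IsDomain R] [Fintype n] [DecidableEq n] {p : ℕ} [Fact p.Prime] [CharP R p] (g : GL n R)
    {a k : ℕ} (hg : orderOf g ∣ p ^ a) (hk : Fintype.card n ≤ p ^ k) : orderOf g ∣ p ^ k := by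
  cases isEmpty_or_nonempty n
  · simp [Subsingleton.elim g 1]
  rw [Units.orderOf_dvd_expChar_pow_iff] at hg ⊢
  exact pow_eq_zero_of_le hk (Matrix.pow_card_eq_zero_of_isNilpotent ⟨_, hg⟩)

open Matrix

/-- If `g ∈ GL_n(𝔽_p)` has order `p^a` with `a ≥ 1`, then `n ≥ p^(a-1) + 1`. -/
theorem dim_lower_bound_of_order_pPow {p : ℕ} [Fact p.Prime] {a n : ℕ} (ha : 1 ≤ a)
    (g : GL (Fin n) (ZMod p)) (hg : orderOf g = p ^ a) :
    p ^ (a - 1) + 1 ≤ n := by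
  by_contra! hn
  have hdvd : orderOf g ∣ p ^ (a - 1) :=
    GeneralLinearGroup.orderOf_dvd_char_pow_of_card_le g hg.dvd (by rw [Fintype.card_fin]; omega)
  rw [hg, Nat.pow_dvd_pow_iff_le_right (Fact.out : p.Prime).one_lt] at hdvd
  omega
end

section
/- Let p be a prime, H a finite group, T ∈ Syl_p(H), and K a subnormal subgroup of H with T ≤ K. Then the normal closure ⟨T^H⟩ of T in H is contained in K. -/
/-!
By Frattini's argument, if `N ⊴ M` and a Sylow subgroup `P` of `H` lies in `N`, then
`M = N · N_M(P)`, so every `M`-conjugate of `P` is already an `N`-conjugate. Descending the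
subnormal series from `H` to `K`, every conjugate of `T` is a `K`-conjugate of `T`, hence lies
in `K`.
-/

/-- `K` is a subnormal subgroup of `G`: there is a chain `K = c 0 ⊴ c 1 ⊴ ⋯ ⊴ c n = G`
with each term normal in the next. -/
def IsSubnormal {G : Type*} [Group G] (K : Subgroup G) : Prop :=
  ∃ (n : ℕ) (c : ℕ → Subgroup G), c 0 = K ∧ c n = ⊤ ∧
    ∀ i < n, c i ≤ c (i + 1) ∧ ((c i).subgroupOf (c (i + 1))).Normal

theorem IsSubnormal.subgroup_isSubnormal {G : Type*} [Group G] {K : Subgroup G}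
    (hK : IsSubnormal K) : K.IsSubnormal := by
  obtain ⟨n, c, hc0, hcn, hc⟩ := hK
  induction n generalizing K c with
  | zero => exact hc0 ▸ hcn ▸ .top
  | succ n ih =>
    subst hc0
    exact .step _ _ (hc 0 n.succ_pos).1
      (ih (c := fun i ↦ c (i + 1)) rfl hcn fun i hi ↦ hc (i + 1) (by omega))
      (hc 0 n.succ_pos).2

namespace Sylow

variable {p : ℕ} [Fact p.Prime] {G : Type*} [Group G] [Finite G]

theorem exists_mem_smul_eq_of_normal_subgroupOf (P : Sylow p G) {N M : Subgroup G}
    (hNM : N ≤ M) [(N.subgroupOf M).Normal] (hPN : (P : Subgroup G) ≤ N) {g : G} (hg : g ∈ M) :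
    ∃ n ∈ N, n • P = g • P := by
  have hPM := hPN.trans hNM
  have hgM : (⟨g, hg⟩ : M) ∈ N.subgroupOf M ⊔
      Subgroup.normalizer (P.subtype hPM : Set M) := by
    rw [sup_comm, normalizer_sup_eq_top' (N := N.subgroupOf M) (P.subtype hPM)
      (by rw [coe_subtype]; exact Subgroup.subgroupOf_mono M hPN)]
    trivial
  obtain ⟨n, hn, u, hu, hnu⟩ := Subgroup.mem_sup_of_normal_left.1 hgM
  obtain rfl : g = n * u := congrArg Subtype.val hnu.symm
  have hu : (u : G) • P = P := by
    rw [← smul_eq_iff_mem_normalizer, smul_subtype] at hu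
    exact subtype_injective hu
  exact ⟨n, hn, by rw [mul_smul, hu]⟩

theorem exists_mem_smul_eq_of_isSubnormal (P : Sylow p G) {K : Subgroup G} (hK : K.IsSubnormal)
    (hPK : (P : Subgroup G) ≤ K) (g : G) : ∃ k ∈ K, k • P = g • P := by
  induction hK with
  | top => exact ⟨g, trivial, rfl⟩
  | step N M hNM _ _ ih =>
    obtain ⟨m, hm, hmg⟩ := ih (hPK.trans hNM)
    obtain ⟨n, hn, hnm⟩ := P.exists_mem_smul_eq_of_normal_subgroupOf hNM hPK hm
    exact ⟨n, hn, hnm.trans hmg⟩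

end Sylow

open scoped Pointwise in
theorem Subgroup.normalClosure_le_of_forall_conj_smul_subset {G : Type*} [Group G] {s : Set G}
    {K : Subgroup G} (h : ∀ g : G, MulAut.conj g • s ⊆ K) : normalClosure s ≤ K := by
  rw [normalClosure, closure_le]
  intro x hx
  obtain ⟨a, ha, hconj⟩ := Group.mem_conjugatesOfSet_iff.1 hx
  obtain ⟨g, rfl⟩ := isConj_iff.1 hconj
  exact h g ⟨a, ha, rfl⟩

/-- If `T` is a Sylow `p`-subgroup of the finite group `H` and `K` is a subnormal subgroup
of `H` containing `T`, then the normal closure `⟨T^H⟩` is contained in `K`. -/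
theorem normalClosure_le_subnormal {p : ℕ} (hp : p.Prime) {H : Type*} [Group H] [Finite H]
    (T : Sylow p H) (K : Subgroup H) (hK : IsSubnormal K) (hTK : (T : Subgroup H) ≤ K) :
    Subgroup.normalClosure ((T : Subgroup H) : Set H) ≤ K := by
  have : Fact p.Prime := ⟨hp⟩
  refine Subgroup.normalClosure_le_of_forall_conj_smul_subset fun g ↦ ?_
  obtain ⟨k, hk, hkg⟩ := T.exists_mem_smul_eq_of_isSubnormal hK.subgroup_isSubnormal hTK g
  change ((g • T : Sylow p H) : Subgroup H) ≤ K
  rw [← hkg]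
  exact Sylow.smul_le hTK ⟨k, hk⟩
end
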